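/- For all integers m ≥ l ≥ 0, every integer n ≥ 0 and every real x: Σ_{k=0}^{n} (C(n,k)/C(n−k+m,m))·λ^{n−k}·S₁(n−k+m,m)·∫_{[0,1]^l} β^{(m)}_{k,λ}(x + y₁ + ⋯ + y_l) dy₁⋯dy_l = Σ_{k=0}^{n} (C(n,k)/C(n−k+m−l,m−l))·λ^{n−k}·S₁(n−k+m−l,m−l)·β^{(m−l)}_{k,λ}(x), where the integral over the l-dimensional unit cube is the expectation with respect to the sum of l independent uniform [0,1] random variables (for l = 0 the integral is just β^{(m)}_{k,λ}(x)). -/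

import Mathlib

/-
Write `E x = e_λ^x(t)`, `G m x = Σₙ β^{(m)}_{n,λ}(x) tⁿ/n!` and `L = log (1 + λt)`. Both sides of
the identity are `n! [tⁿ]` of a product with `W m = (L / (λt)) ^ m`, whose coefficients are
`λʲ S₁(j+m, m) / C(j+m, m) / j!` because `L ^ m / m! = Σₙ λⁿ S₁(n, m) tⁿ/n!`.
Since `E (x + y) = E x * E y`, integrating over the cube multiplies `G m x` by `H ^ l`, where
`H = ∫₀¹ E y dy`. As `∂_y E y = (L / λ) * E y`, the fundamental theorem of calculus gives
`H * L = λ (E 1 - 1)`. Together with `G m x * (E 1 - 1) ^ m = t ^ m * E x`, this yields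
`G m x * H ^ l * W m = G (m - l) x * W (m - l)` after multiplying by `(λt) ^ m (E 1 - 1) ^ m`.
-/

open Finset PowerSeries

noncomputable def dff (lam x : ℝ) (n : ℕ) : ℝ := ∏ i ∈ Finset.range n, (x - i * lam)

noncomputable def degExp (lam x : ℝ) : PowerSeries ℝ :=
  PowerSeries.mk fun k => dff lam x k / k.factorial

noncomputable def S1 : ℕ → ℕ → ℝ
  | 0, 0 => 1
  | 0, _ + 1 => 0
  | n + 1, 0 => -(n : ℝ) * S1 n 0
  | n + 1, k + 1 => S1 n k - (n : ℝ) * S1 n (k + 1)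

open MeasureTheory

noncomputable def egf (p : ℕ → ℝ) : PowerSeries ℝ := PowerSeries.mk fun n => p n / n.factorial

lemma coeff_egf (p : ℕ → ℝ) (n : ℕ) : coeff n (egf p) = p n / n.factorial := coeff_mk _ _

lemma egf_injective : Function.Injective egf := by
  intro p q h
  funext n
  have := congrArg (coeff n) h
  rwa [coeff_egf, coeff_egf, div_left_inj' (by positivity)] at this

lemma egf_mul (p q : ℕ → ℝ) :
    egf p * egf q = egf fun n => ∑ ij ∈ antidiagonal n, (n.choose ij.1 : ℝ) * p ij.1 * q ij.2 := by
  ext n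
  rw [coeff_mul, coeff_egf, sum_div]
  refine sum_congr rfl fun ij hij => ?_
  rw [HasAntidiagonal.mem_antidiagonal] at hij
  have hfac : (n.choose ij.1 : ℝ) * ij.1.factorial * ij.2.factorial = n.factorial := by
    rw_mod_cast [← hij, Nat.choose_symm_add, Nat.add_choose_mul_factorial_mul_factorial]
  rw [coeff_egf, coeff_egf, div_mul_div_comm, eq_div_iff (by positivity), ← hfac]
  field_simp

lemma egf_add (p q : ℕ → ℝ) : egf p + egf q = egf (p + q) := by
  ext n
  simp only [map_add, coeff_egf, Pi.add_apply, add_div]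

lemma C_mul_egf (a : ℝ) (p : ℕ → ℝ) : C a * egf p = egf fun n => a * p n := by
  ext n
  simp only [coeff_C_mul, coeff_egf, mul_div_assoc]

lemma X_mul_egf (p : ℕ → ℝ) : X * egf p = egf fun n => n * p (n - 1) := by
  ext n
  cases n with
  | zero => simp [coeff_egf]
  | succ n =>
    rw [coeff_succ_X_mul, coeff_egf, coeff_egf, Nat.factorial_succ, Nat.add_sub_cancel]
    push_cast
    field_simp

lemma derivative_egf (p : ℕ → ℝ) : derivative ℝ (egf p) = egf fun n => p (n + 1) := by
  ext n
  rw [coeff_derivative, coeff_egf, coeff_egf, Nat.factorial_succ]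
  push_cast
  field_simp

lemma dff_succ (lam x : ℝ) (n : ℕ) : dff lam x (n + 1) = dff lam x n * (x - n * lam) :=
  prod_range_succ _ _

lemma dff_zero_left (lam : ℝ) (n : ℕ) : dff lam 0 n = if n = 0 then 1 else 0 := by
  cases n with
  | zero => simp [dff]
  | succ n => simpa [dff] using prod_eq_zero (mem_range.2 n.succ_pos) (by simp)

@[fun_prop]
lemma continuous_dff (lam : ℝ) (n : ℕ) : Continuous fun x => dff lam x n :=
  continuous_finsetProd _ fun _ _ => by fun_prop

lemma dff_add (lam x y : ℝ) (n : ℕ) :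
    dff lam (x + y) n
      = ∑ ij ∈ antidiagonal n, (n.choose ij.1 : ℝ) * dff lam x ij.1 * dff lam y ij.2 := by
  induction n with
  | zero => simp [dff]
  | succ n ih =>
    simp_rw [mul_assoc, sum_antidiagonal_choose_succ_mul (fun i j => dff lam x i * dff lam y j),
      dff_succ, ih, sum_mul, ← sum_add_distrib]
    refine sum_congr rfl fun ij hij => ?_
    rw [HasAntidiagonal.mem_antidiagonal] at hij
    rw [Nat.choose_symm_of_eq_add hij.symm, ← hij]
    push_cast
    ring

lemma degExp_eq_egf (lam x : ℝ) : degExp lam x = egf (dff lam x) := rfl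

lemma degExp_add (lam x y : ℝ) : degExp lam (x + y) = degExp lam x * degExp lam y := by
  simp only [degExp_eq_egf, egf_mul]
  exact congrArg egf (funext (dff_add lam x y))

lemma degExp_zero (lam : ℝ) : degExp lam 0 = 1 := by
  ext n
  cases n <;> simp [degExp, dff_zero_left, coeff_one]

lemma degExp_one_sub_one_ne_zero (lam : ℝ) : degExp lam 1 - 1 ≠ 0 := by
  intro h
  have := congrArg (coeff 1) h
  simp [degExp, dff] at this

lemma S1_zero_right (n : ℕ) : S1 n 0 = if n = 0 then 1 else 0 := by
  induction n with
  | zero => rfl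
  | succ n ih => simp [S1, ih]

lemma S1_succ_succ (n k : ℕ) : S1 (n + 1) (k + 1) = S1 n k - n * S1 n (k + 1) := rfl

lemma S1_eq_zero_of_lt {n k : ℕ} (h : n < k) : S1 n k = 0 := by
  induction n generalizing k with
  | zero => obtain ⟨k, rfl⟩ := Nat.exists_eq_add_of_lt h; rfl
  | succ n ih =>
    obtain ⟨k, rfl⟩ := Nat.exists_eq_add_of_le' (Nat.one_le_of_lt h)
    rw [S1_succ_succ, ih (by omega), ih (by omega), mul_zero, sub_zero]

/-- `(log (1 + lam t)) ^ k / k!`, by `stirlingEgf_one_pow`. -/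
noncomputable def stirlingEgf (lam : ℝ) (k : ℕ) : PowerSeries ℝ := egf fun n => S1 n k * lam ^ n

lemma stirlingEgf_zero (lam : ℝ) : stirlingEgf lam 0 = 1 := by
  ext n
  cases n <;> simp [stirlingEgf, coeff_egf, S1_zero_right, coeff_one]

lemma constantCoeff_stirlingEgf_succ (lam : ℝ) (k : ℕ) :
    constantCoeff (stirlingEgf lam (k + 1)) = 0 := by
  rw [← coeff_zero_eq_constantCoeff_apply, stirlingEgf, coeff_egf, S1_eq_zero_of_lt k.succ_pos]
  simp

lemma one_add_C_mul_X_mul_derivative_stirlingEgf (lam : ℝ) (k : ℕ) :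
    (1 + C lam * X) * derivative ℝ (stirlingEgf lam (k + 1)) = C lam * stirlingEgf lam k := by
  rw [stirlingEgf, stirlingEgf, derivative_egf, add_mul, one_mul, mul_assoc, X_mul_egf,
    C_mul_egf, C_mul_egf, egf_add]
  congr 1
  funext n
  cases n with
  | zero => simp [S1_succ_succ, mul_comm]
  | succ n =>
    simp only [Pi.add_apply, Nat.add_sub_cancel, S1_succ_succ (n + 1)]
    push_cast
    ring

lemma stirlingEgf_one_pow (lam : ℝ) (k : ℕ) :
    stirlingEgf lam 1 ^ k = k.factorial • stirlingEgf lam k := by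
  induction k with
  | zero => simp [stirlingEgf_zero]
  | succ k ih =>
    rw [nsmul_eq_mul] at ih ⊢
    refine derivative.ext (mul_left_cancel₀ (a := 1 + C lam * X) ?_ ?_) ?_
    · intro h
      simpa using congrArg constantCoeff h
    · have h1 := one_add_C_mul_X_mul_derivative_stirlingEgf lam 0
      have h2 := one_add_C_mul_X_mul_derivative_stirlingEgf lam k
      rw [stirlingEgf_zero] at h1
      rw [derivative_pow, Nat.add_sub_cancel, ih, Derivation.leibniz, Derivation.map_natCast,
        smul_zero, add_zero, smul_eq_mul, Nat.factorial_succ, Nat.cast_mul]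
      linear_combination (↑(k + 1) * ↑k.factorial * stirlingEgf lam k) * h1
        - ↑(k + 1) * ↑k.factorial * h2
    · rw [map_pow, map_mul, constantCoeff_stirlingEgf_succ, constantCoeff_stirlingEgf_succ]
      simp

/-- `(log (1 + lam t) / (lam t)) ^ m`, by `C_mul_X_pow_mul_stirlingWeightEgf`. -/
noncomputable def stirlingWeightEgf (lam : ℝ) (m : ℕ) : PowerSeries ℝ :=
  egf fun j => lam ^ j * S1 (j + m) m / (j + m).choose m

lemma C_mul_X_pow_mul_stirlingWeightEgf (lam : ℝ) (m : ℕ) :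
    (C lam * X) ^ m * stirlingWeightEgf lam m = stirlingEgf lam 1 ^ m := by
  rw [stirlingEgf_one_pow, mul_pow, ← map_pow, mul_comm (C _), mul_assoc]
  ext n
  rw [coeff_X_pow_mul', nsmul_eq_mul, ← map_natCast C, coeff_C_mul, coeff_C_mul, stirlingEgf,
    coeff_egf]
  split_ifs with hmn
  · obtain ⟨j, rfl⟩ := Nat.exists_eq_add_of_le' hmn
    have hfac : ((j + m).choose m : ℝ) * j.factorial * m.factorial = (j + m).factorial := by
      exact_mod_cast Nat.add_choose_mul_factorial_mul_factorial j m
    rw [Nat.add_sub_cancel, stirlingWeightEgf, coeff_egf, ← hfac]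
    field_simp
    ring
  · simp [S1_eq_zero_of_lt (not_le.mp hmn)]

lemma hasDerivAt_dff_zero (lam : ℝ) (n : ℕ) :
    HasDerivAt (fun h => dff lam h n) (S1 n 1 * lam ^ (n - 1)) 0 := by
  induction n with
  | zero => simpa [dff, S1] using hasDerivAt_const (0 : ℝ) (1 : ℝ)
  | succ n ih =>
    simp_rw [dff_succ]
    refine (ih.fun_mul ((hasDerivAt_id' (0 : ℝ)).sub_const (n * lam))).congr_deriv ?_
    cases n with
    | zero => simp [S1, dff]
    | succ n => simp [S1_succ_succ, S1_zero_right, dff_zero_left, pow_succ]; ring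

lemma hasDerivAt_dff (lam y : ℝ) (n : ℕ) :
    HasDerivAt (fun z => dff lam z n)
      (∑ ij ∈ antidiagonal n, (n.choose ij.1 : ℝ) * dff lam y ij.1 * (S1 ij.2 1 * lam ^ (ij.2 - 1)))
      y := by
  have hsplit : ∀ z, dff lam z n
      = ∑ ij ∈ antidiagonal n, (n.choose ij.1 : ℝ) * dff lam y ij.1 * dff lam (z - y) ij.2 := by
    intro z
    rw [← dff_add, add_sub_cancel]
  simp_rw [hsplit]
  refine HasDerivAt.fun_sum fun ij _ => HasDerivAt.const_mul _ ?_
  exact HasDerivAt.comp_sub_const y y (by rw [sub_self]; exact hasDerivAt_dff_zero lam ij.2)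

noncomputable def integralDegExp (lam : ℝ) : PowerSeries ℝ :=
  egf fun n => ∫ y in (0 : ℝ)..1, dff lam y n

lemma degExp_one_sub_one (lam : ℝ) :
    degExp lam 1 - 1 = integralDegExp lam * egf fun n => S1 n 1 * lam ^ (n - 1) := by
  rw [sub_eq_iff_eq_add, ← degExp_zero lam, integralDegExp, egf_mul, degExp_eq_egf,
    degExp_eq_egf, egf_add]
  congr 1
  funext n
  have hint : ∀ i ∈ antidiagonal n, IntervalIntegrable (fun y => (n.choose i.1 : ℝ) * dff lam y i.1
      * (S1 i.2 1 * lam ^ (i.2 - 1))) volume 0 1 := fun i _ =>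
    Continuous.intervalIntegrable (by fun_prop) 0 1
  have hftc := intervalIntegral.integral_eq_sub_of_hasDerivAt (fun y _ => hasDerivAt_dff lam y n)
    (Continuous.intervalIntegrable (by fun_prop) 0 1)
  rw [intervalIntegral.integral_finsetSum hint] at hftc
  simp only [intervalIntegral.integral_mul_const, intervalIntegral.integral_const_mul] at hftc
  rw [Pi.add_apply, hftc, sub_add_cancel]

lemma integralDegExp_mul_stirlingEgf_one (lam : ℝ) :
    integralDegExp lam * stirlingEgf lam 1 = C lam * (degExp lam 1 - 1) := by
  rw [degExp_one_sub_one, mul_left_comm, C_mul_egf, stirlingEgf]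
  congr 2
  funext n
  cases n with
  | zero => simp [S1]
  | succ n => rw [Nat.add_sub_cancel, pow_succ]; ring

section ShiftedFamily

variable {lam : ℝ} {F : ℝ → ℕ → ℝ} {a : ℕ → ℝ}

lemma eq_sum_of_egf_eq_mul_degExp (hF : ∀ c, egf (F c) = egf a * degExp lam c) (c : ℝ) (k : ℕ) :
    F c k = ∑ ij ∈ antidiagonal k, (k.choose ij.1 : ℝ) * a ij.1 * dff lam c ij.2 := by
  have h := hF c
  rw [degExp_eq_egf, egf_mul] at h
  exact congrFun (egf_injective h) k

lemma continuous_of_egf_eq_mul_degExp (hF : ∀ c, egf (F c) = egf a * degExp lam c) (k : ℕ) :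
    Continuous fun c => F c k := by
  simp_rw [eq_sum_of_egf_eq_mul_degExp hF]
  fun_prop

lemma egf_intervalIntegral_of_egf_eq_mul_degExp (hF : ∀ c, egf (F c) = egf a * degExp lam c) :
    egf (fun k => ∫ c in (0 : ℝ)..1, F c k) = egf a * integralDegExp lam := by
  rw [integralDegExp, egf_mul]
  congr 1
  funext k
  simp_rw [eq_sum_of_egf_eq_mul_degExp hF]
  rw [intervalIntegral.integral_finsetSum
    fun _ _ => Continuous.intervalIntegrable (by fun_prop) 0 1]
  simp only [intervalIntegral.integral_const_mul]

end ShiftedFamily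

lemma egf_add_eq_mul_degExp {lam : ℝ} {B : ℝ → ℕ → ℝ} {m : ℕ}
    (hB : ∀ x, egf (B x) * (degExp lam 1 - 1) ^ m = X ^ m * degExp lam x) (x c : ℝ) :
    egf (B (x + c)) = egf (B x) * degExp lam c := by
  refine mul_right_cancel₀ (pow_ne_zero m (degExp_one_sub_one_ne_zero lam)) ?_
  rw [hB, degExp_add, mul_right_comm, hB, mul_assoc]

lemma setIntegral_cube_zero (f : (Fin 0 → ℝ) → ℝ) :
    ∫ y in Set.univ.pi (fun _ : Fin 0 => Set.Icc (0 : ℝ) 1), f y = f 0 := by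
  rw [setIntegral_congr_fun (MeasurableSet.univ_pi fun _ => measurableSet_Icc)
    (fun y _ => congrArg f (Subsingleton.elim y 0)), setIntegral_const, measureReal_def,
    volume_pi_pi]
  simp

lemma setIntegral_cube_succ {g : ℝ → ℝ} (hg : Continuous g) (l : ℕ) :
    ∫ y in Set.univ.pi (fun _ : Fin (l + 1) => Set.Icc (0 : ℝ) 1), g (∑ i, y i)
      = ∫ c in (0 : ℝ)..1,
          ∫ y in Set.univ.pi (fun _ : Fin l => Set.Icc (0 : ℝ) 1), g (c + ∑ i, y i) := by
  let e := MeasurableEquiv.piFinSuccAbove (fun _ : Fin (l + 1) => ℝ) 0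
  have hsymm : ∀ z : ℝ × (Fin l → ℝ), e.symm z = Fin.insertNth 0 z.1 z.2 := fun _ => rfl
  have hset : e.symm ⁻¹' Set.univ.pi (fun _ : Fin (l + 1) => Set.Icc (0 : ℝ) 1)
      = Set.Icc (0 : ℝ) 1 ×ˢ Set.univ.pi (fun _ : Fin l => Set.Icc (0 : ℝ) 1) := by
    ext z
    simp only [Set.mem_preimage, Set.mem_univ_pi, Set.mem_prod, hsymm,
      Fin.forall_iff_succAbove (0 : Fin (l + 1)), Fin.insertNth_apply_same,
      Fin.insertNth_apply_succAbove]
  have hsum : ∀ z : ℝ × (Fin l → ℝ), g (∑ i, e.symm z i) = g (z.1 + ∑ i, z.2 i) := fun z => by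
    rw [hsymm, Fin.sum_univ_succAbove _ 0]
    simp
  have hpres := (volume_preserving_piFinSuccAbove (fun _ : Fin (l + 1) => ℝ) 0).symm
  rw [← hpres.setIntegral_preimage_emb e.symm.measurableEmbedding, hset,
    integral_congr_ae (ae_of_all _ hsum), Measure.volume_eq_prod, setIntegral_prod,
    intervalIntegral.integral_of_le zero_le_one, ← integral_Icc_eq_integral_Ioc]
  exact ContinuousOn.integrableOn_compact (isCompact_Icc.prod
    (isCompact_univ_pi fun _ => isCompact_Icc)) (by fun_prop)

lemma egf_setIntegral_cube {lam : ℝ} {F : ℝ → ℕ → ℝ}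
    (hF : ∀ x c, egf (F (x + c)) = egf (F x) * degExp lam c) (l : ℕ) (x : ℝ) :
    egf (fun k => ∫ y in Set.univ.pi (fun _ : Fin l => Set.Icc (0 : ℝ) 1), F (x + ∑ i, y i) k)
      = egf (F x) * integralDegExp lam ^ l := by
  induction l generalizing x with
  | zero =>
    rw [pow_zero, mul_one]
    congr 1
    funext k
    rw [setIntegral_cube_zero]
    simp
  | succ l ih =>
    have hshift : ∀ c, egf (fun k => ∫ y in Set.univ.pi (fun _ : Fin l => Set.Icc (0 : ℝ) 1),
          F (x + c + ∑ i, y i) k)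
        = egf (fun k => ∫ y in Set.univ.pi (fun _ : Fin l => Set.Icc (0 : ℝ) 1),
          F (x + ∑ i, y i) k) * degExp lam c := fun c => by
      rw [ih, ih, hF, mul_right_comm]
    simp_rw [setIntegral_cube_succ (continuous_of_egf_eq_mul_degExp (hF x) _), ← add_assoc]
    rw [egf_intervalIntegral_of_egf_eq_mul_degExp hshift, ih, pow_succ, mul_assoc]

lemma egf_mul_integralDegExp_pow_mul_stirlingWeightEgf {lam : ℝ} (hlam : lam ≠ 0)
    {B : ℕ → ℝ → ℕ → ℝ}
    (hB : ∀ m x, egf (B m x) * (degExp lam 1 - 1) ^ m = X ^ m * degExp lam x) (r l : ℕ) (x : ℝ) :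
    egf (B (r + l) x) * integralDegExp lam ^ l * stirlingWeightEgf lam (r + l)
      = egf (B r x) * stirlingWeightEgf lam r := by
  have hT : (C lam * X : PowerSeries ℝ) ≠ 0 := mul_ne_zero (by simpa using hlam) X_ne_zero
  refine mul_right_cancel₀ (mul_ne_zero (pow_ne_zero (r + l) hT)
    (pow_ne_zero (r + l) (degExp_one_sub_one_ne_zero lam))) ?_
  calc _ = egf (B (r + l) x) * (degExp lam 1 - 1) ^ (r + l)
          * ((C lam * X) ^ (r + l) * stirlingWeightEgf lam (r + l)) * integralDegExp lam ^ l := by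
        ring
    _ = X ^ (r + l) * degExp lam x * stirlingEgf lam 1 ^ r
          * (integralDegExp lam * stirlingEgf lam 1) ^ l := by
        rw [hB, C_mul_X_pow_mul_stirlingWeightEgf]
        ring
    _ = egf (B r x) * (degExp lam 1 - 1) ^ r * ((C lam * X) ^ r * stirlingWeightEgf lam r)
          * (C lam * X) ^ l * (degExp lam 1 - 1) ^ l := by
        rw [hB, C_mul_X_pow_mul_stirlingWeightEgf, integralDegExp_mul_stirlingEgf_one]
        simp only [mul_pow]
        ring
    _ = _ := by ring

lemma sum_choose_div_choose_mul_eq_coeff (lam : ℝ) (m : ℕ) (q : ℕ → ℝ) (n : ℕ) :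
    ∑ k ∈ range (n + 1), ((n.choose k : ℝ) / ((n - k + m).choose m : ℝ))
        * lam ^ (n - k) * S1 (n - k + m) m * q k
      = n.factorial * coeff n (egf q * stirlingWeightEgf lam m) := by
  rw [stirlingWeightEgf, egf_mul, coeff_egf, mul_div_cancel₀ _ (by positivity),
    Nat.sum_antidiagonal_eq_sum_range_succ
      (fun i j => (n.choose i : ℝ) * q i * (lam ^ j * S1 (j + m) m / ((j + m).choose m)))]
  exact sum_congr rfl fun k _ => by ring

theorem stmt14 (lam : ℝ) (hlam : lam ≠ 0)
    (B : ℕ → ℝ → ℕ → ℝ)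
    (hB : ∀ m x, (PowerSeries.mk fun n => B m x n / n.factorial) * (degExp lam 1 - 1) ^ m
        = (PowerSeries.X : PowerSeries ℝ) ^ m * degExp lam x)
    (m l : ℕ) (hml : l ≤ m) (n : ℕ) (x : ℝ) :
    ∑ k ∈ Finset.range (n + 1),
      ((n.choose k : ℝ) / ((n - k + m).choose m : ℝ)) * lam ^ (n - k) * S1 (n - k + m) m
        * (∫ y in (Set.univ.pi fun _ : Fin l => Set.Icc (0:ℝ) 1),
            B m (x + ∑ i, y i) k)
    = ∑ k ∈ Finset.range (n + 1),
      ((n.choose k : ℝ) / ((n - k + (m - l)).choose (m - l) : ℝ)) * lam ^ (n - k)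
        * S1 (n - k + (m - l)) (m - l) * B (m - l) x k := by
  obtain ⟨r, rfl⟩ := Nat.exists_eq_add_of_le' hml
  rw [Nat.add_sub_cancel, sum_choose_div_choose_mul_eq_coeff, sum_choose_div_choose_mul_eq_coeff,
    egf_setIntegral_cube (egf_add_eq_mul_degExp (hB (r + l))),
    egf_mul_integralDegExp_pow_mul_stirlingWeightEgf hlam hB]
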